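/- Fix x ∈ Σ and assume that either the control problem has the approximation property at x (and at x for every initial time t, with trajectories on [t,T]) or the point x is unreachable. Then for every t ∈ [0,T] the value function u(·,t) is continuous at x. -/

import Mathlib

open MeasureTheory Set Filter Topology

noncomputable section

/-- Squared Euclidean norm on ℝ². -/
def sq2 (v : ℝ × ℝ) : ℝ := v.1 ^ 2 + v.2 ^ 2

/-- Euclidean norm on ℝ². -/
def enorm2 (v : ℝ × ℝ) : ℝ := Real.sqrt (sq2 v)

/-- `(y, α)` is an admissible trajectory for the Grushin-type dynamics on `[t,T]`,
starting from `x` and constrained to the set `S`:  `y ∈ W^{1,1}`, `α` measurable,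
`y₁' = α₁`, `y₂' = |y₁|^ν α₂` a.e. (in integral form), `y(t) = x`, `y(s) ∈ S`. -/
def Admissible (ν : ℝ) (S : Set (ℝ × ℝ)) (t T : ℝ) (x : ℝ × ℝ)
    (y α : ℝ → ℝ × ℝ) : Prop :=
  Measurable α ∧
  IntervalIntegrable (fun τ => (α τ).1) volume t T ∧
  IntervalIntegrable (fun τ => |(y τ).1| ^ ν * (α τ).2) volume t T ∧
  (∀ s ∈ Icc t T, (y s).1 = x.1 + ∫ τ in t..s, (α τ).1) ∧
  (∀ s ∈ Icc t T, (y s).2 = x.2 + ∫ τ in t..s, |(y τ).1| ^ ν * (α τ).2) ∧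
  (∀ s ∈ Icc t T, y s ∈ S)

/-- `α ∈ L²(t,T)`. -/
def InL2 (α : ℝ → ℝ × ℝ) (t T : ℝ) : Prop :=
  IntervalIntegrable (fun τ => sq2 (α τ)) volume t T

/-- The cost `J_t(x;(y,α))`. -/
def cost (l : ℝ × ℝ → ℝ → ℝ) (g : ℝ × ℝ → ℝ) (t T : ℝ) (y α : ℝ → ℝ × ℝ) : ℝ :=
  (∫ τ in t..T, (sq2 (α τ) / 2 + l (y τ) τ)) + g (y T)

/-- `Γ_t[x]`: admissible trajectories from `(x,t)` with finite cost (`α ∈ L²`). -/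
def Gamma (ν : ℝ) (S : Set (ℝ × ℝ)) (t T : ℝ) (x : ℝ × ℝ) :
    Set ((ℝ → ℝ × ℝ) × (ℝ → ℝ × ℝ)) :=
  {p | Admissible ν S t T x p.1 p.2 ∧ InL2 p.2 t T}

/-- `Γ_t^{opt}[x]`: optimal trajectories. -/
def GammaOpt (ν : ℝ) (S : Set (ℝ × ℝ)) (l : ℝ × ℝ → ℝ → ℝ) (g : ℝ × ℝ → ℝ)
    (t T : ℝ) (x : ℝ × ℝ) : Set ((ℝ → ℝ × ℝ) × (ℝ → ℝ × ℝ)) :=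
  {p | p ∈ Gamma ν S t T x ∧
    ∀ q ∈ Gamma ν S t T x, cost l g t T p.1 p.2 ≤ cost l g t T q.1 q.2}

/-- The value function `u(x,t)`. -/
def valueFun (ν : ℝ) (S : Set (ℝ × ℝ)) (l : ℝ × ℝ → ℝ → ℝ) (g : ℝ × ℝ → ℝ)
    (T : ℝ) (x : ℝ × ℝ) (t : ℝ) : ℝ :=
  sInf ((fun p => cost l g t T p.1 p.2) '' Gamma ν S t T x)

/-- Closed graph property of `Γ_t^{opt}[x]`. -/
def ClosedGraphAt (ν : ℝ) (S : Set (ℝ × ℝ)) (l : ℝ × ℝ → ℝ → ℝ) (g : ℝ × ℝ → ℝ)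
    (t T : ℝ) (x : ℝ × ℝ) : Prop :=
  ∀ (xs : ℕ → ℝ × ℝ) (ys as : ℕ → ℝ → ℝ × ℝ) (y : ℝ → ℝ × ℝ),
    (∀ n, xs n ∈ S) → Tendsto xs atTop (𝓝 x) →
    (∀ n, (ys n, as n) ∈ GammaOpt ν S l g t T (xs n)) →
    TendstoUniformlyOn ys y atTop (Icc t T) →
    ∃ α, (y, α) ∈ GammaOpt ν S l g t T x

/-- Approximation property at `x` for initial time `t`. -/
def ApproxProperty (ν : ℝ) (S : Set (ℝ × ℝ)) (l : ℝ × ℝ → ℝ → ℝ) (g : ℝ × ℝ → ℝ)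
    (t T : ℝ) (x : ℝ × ℝ) : Prop :=
  ∀ y α, (y, α) ∈ Gamma ν S t T x →
    ∀ xs : ℕ → ℝ × ℝ, (∀ n, xs n ∈ S) → Tendsto xs atTop (𝓝 x) →
      ∃ ys as : ℕ → ℝ → ℝ × ℝ,
        (∀ n, (ys n, as n) ∈ Gamma ν S t T (xs n)) ∧
        TendstoUniformlyOn ys y atTop (Icc t T) ∧
        Tendsto (fun n => (∫ τ in t..T, sq2 (as n τ)) - ∫ τ in t..T, sq2 (α τ))
          atTop (𝓝 0) ∧
        Tendsto (fun n => cost l g t T (ys n) (as n)) atTop (𝓝 (cost l g t T y α))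

/-- The point `x` is unreachable: no admissible trajectory with finite cost,
starting from another point of `S`, reaches `x` at time `T`. -/
def Unreachable (ν : ℝ) (S : Set (ℝ × ℝ)) (T : ℝ) (x : ℝ × ℝ) : Prop :=
  ∀ xb ∈ S \ {x}, ¬ ∃ p ∈ Gamma ν S 0 T xb, p.1 T = x

/-- Reachability property of the dynamics at `x`. -/
def ReachProperty (ν : ℝ) (S : Set (ℝ × ℝ)) (T : ℝ) (x : ℝ × ℝ) : Prop :=
  ∀ xs : ℕ → ℝ × ℝ, (∀ n, xs n ∈ S) → Tendsto xs atTop (𝓝 x) →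
    ∃ (δ : ℕ → ℝ) (ys as : ℕ → ℝ → ℝ × ℝ),
      (∀ n, δ n ∈ Icc 0 T) ∧
      (∀ n, Admissible ν S 0 (δ n) (xs n) (ys n) (as n) ∧ InL2 (as n) 0 (δ n) ∧
        ys n (δ n) = x) ∧
      Tendsto (fun n => ∫ τ in (0:ℝ)..(δ n), sq2 (as n τ)) atTop (𝓝 0) ∧
      Tendsto δ atTop (𝓝 0)

/-- `x₁`-convexity of a subset of the plane. -/
def X1Convex (A : Set (ℝ × ℝ)) : Prop :=
  ∀ a b h : ℝ, (a, b) ∈ A → 0 < h → (a + h, b) ∈ A →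
    ∀ t ∈ Icc (0:ℝ) 1, (a + t * h, b) ∈ A

/-- Hypothesis (H1). -/
def HypH1 (S : Set (ℝ × ℝ)) : Prop :=
  ∀ x0 ∈ frontier S, x0.1 ≠ 0 →
    ∃ R > 0, X1Convex (S ∩ Metric.ball x0 R) ∧
      ((S ∩ Metric.ball x0 R ∩ {p | x0.2 < p.2}).Nonempty →
        ∃ C > 0,
          {p : ℝ × ℝ | p.1 = x0.1 ∧ p.2 ∈ Ioc x0.2 (x0.2 + R)} ⊆ S ∨
          {p : ℝ × ℝ | p.1 ∈ Ioc x0.1 (x0.1 + R) ∧ p.2 = x0.2 + C * (p.1 - x0.1)} ⊆ S ∨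
          {p : ℝ × ℝ | p.1 ∈ Ico (x0.1 - R) x0.1 ∧ p.2 = x0.2 + C * (x0.1 - p.1)} ⊆ S) ∧
      ((S ∩ Metric.ball x0 R ∩ {p | p.2 < x0.2}).Nonempty →
        ∃ C > 0,
          {p : ℝ × ℝ | p.1 = x0.1 ∧ p.2 ∈ Ico (x0.2 - R) x0.2} ⊆ S ∨
          {p : ℝ × ℝ | p.1 ∈ Ioc x0.1 (x0.1 + R) ∧ p.2 = x0.2 - C * (p.1 - x0.1)} ⊆ S ∨
          {p : ℝ × ℝ | p.1 ∈ Ico (x0.1 - R) x0.1 ∧ p.2 = x0.2 - C * (x0.1 - p.1)} ⊆ S)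

/-- Hypothesis (H2). -/
def HypH2 (ν : ℝ) (S : Set (ℝ × ℝ)) : Prop :=
  ∀ x0 ∈ frontier S, x0.1 = 0 →
    ∃ R > 0, X1Convex (S ∩ Metric.ball x0 R) ∧
      ((S ∩ Metric.ball x0 R ∩ {p | x0.2 < p.2}).Nonempty →
        ∃ C > 0,
          {p : ℝ × ℝ | p.1 ∈ Ioc 0 R ∧ p.2 = x0.2 + C * p.1 ^ (ν + 1)} ⊆ S ∨
          {p : ℝ × ℝ | p.1 ∈ Ico (-R) 0 ∧ p.2 = x0.2 + C * (-p.1) ^ (ν + 1)} ⊆ S) ∧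
      ((S ∩ Metric.ball x0 R ∩ {p | p.2 < x0.2}).Nonempty →
        ∃ C > 0,
          {p : ℝ × ℝ | p.1 ∈ Ioc 0 R ∧ p.2 = x0.2 - C * p.1 ^ (ν + 1)} ⊆ S ∨
          {p : ℝ × ℝ | p.1 ∈ Ico (-R) 0 ∧ p.2 = x0.2 - C * (-p.1) ^ (ν + 1)} ⊆ S)

/-!
For `t = T` the value function is `g`. For `t < T`, lower semicontinuity is the direct method:
near-optimal trajectories from points `z k → x` have bounded energy, so along a subsequence both
components of their controls converge weakly in `L²(t,T)` (sequential Banach–Alaoglu). The first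
components `y₁` then converge pointwise, so `|y₁|^ν` converges strongly in `L²` and the second
components converge too; the limit is a trajectory from `x` whose cost is at most the limit of the
costs, by weak lower semicontinuity of the energy.

Upper semicontinuity comes from the approximation property, which carries a near-optimal trajectory
from `x` to nearby starting points at almost the same cost. If instead `x` is unreachable, every
trajectory from `x` stays at `x`, so `u(x,t)` is the cost of staying at `x`, while `u(z,t)` is at
most the cost of staying at `z`, which tends to it as `z → x`.
-/

open scoped InnerProductSpace

section Semicontinuity

variable {X β : Type*} [TopologicalSpace X] [FirstCountableTopology X] [LinearOrder β]
  {f : X → β} {s : Set X} {x : X}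

theorem lowerSemicontinuousWithinAt_of_seq
    (h : ∀ z : ℕ → X, (∀ k, z k ∈ s) → Tendsto z atTop (𝓝 x) →
      ∀ c, (∀ k, f (z k) ≤ c) → f x ≤ c) :
    LowerSemicontinuousWithinAt f s x := by
  intro c hc
  by_contra hne
  obtain ⟨z, hzx, hz⟩ := exists_seq_forall_of_frequently
    ((not_eventually.1 hne).and_eventually self_mem_nhdsWithin)
  exact (h z (fun k => (hz k).2) (hzx.mono_right nhdsWithin_le_nhds) c
    fun k => not_lt.1 (hz k).1).not_gt hc

theorem upperSemicontinuousWithinAt_of_seq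
    (h : ∀ z : ℕ → X, (∀ k, z k ∈ s) → Tendsto z atTop (𝓝 x) →
      ∀ c, f x < c → ∀ᶠ k in atTop, f (z k) < c) :
    UpperSemicontinuousWithinAt f s x := by
  intro c hc
  by_contra hne
  obtain ⟨z, hzx, hz⟩ := exists_seq_forall_of_frequently
    ((not_eventually.1 hne).and_eventually self_mem_nhdsWithin)
  obtain ⟨k, hk⟩ := (h z (fun k => (hz k).2) (hzx.mono_right nhdsWithin_le_nhds) c hc).exists
  exact (hz k).1 hk

end Semicontinuity

section Hilbert

variable {H : Type*} [NormedAddCommGroup H] [InnerProductSpace ℝ H]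

theorem exists_subseq_tendsto_inner [CompleteSpace H] [TopologicalSpace.SeparableSpace H]
    {f : ℕ → H} {C : ℝ} (hf : ∀ k, ‖f k‖ ≤ C) :
    ∃ a : H, ∃ φ : ℕ → ℕ, StrictMono φ ∧
      ∀ ψ, Tendsto (fun k => ⟪f (φ k), ψ⟫_ℝ) atTop (𝓝 ⟪a, ψ⟫_ℝ) := by
  let e := InnerProductSpace.toDual ℝ H
  obtain ⟨ℓ, -, φ, hφ, hlim⟩ := WeakDual.isSeqCompact_closedBall ℝ H 0 C
    (x := fun k => StrongDual.toWeakDual (e (f k))) (fun k => by simpa [e] using hf k)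
  refine ⟨e.symm (WeakDual.toStrongDual ℓ), φ, hφ, fun ψ => ?_⟩
  simpa [e, Function.comp_def] using ((WeakDual.eval_continuous ψ).tendsto ℓ).comp hlim

theorem sq_norm_add_sq_norm_le_of_tendsto_inner {F G : ℕ → H} {a b : H}
    (hF : ∀ ψ, Tendsto (fun k => ⟪F k, ψ⟫_ℝ) atTop (𝓝 ⟪a, ψ⟫_ℝ))
    (hG : ∀ ψ, Tendsto (fun k => ⟪G k, ψ⟫_ℝ) atTop (𝓝 ⟪b, ψ⟫_ℝ))
    {c : ℕ → ℝ} {c₀ : ℝ} (hc : Tendsto c atTop (𝓝 c₀))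
    (hle : ∀ k, ‖F k‖ ^ 2 + ‖G k‖ ^ 2 ≤ c k) :
    ‖a‖ ^ 2 + ‖b‖ ^ 2 ≤ c₀ := by
  set s := ‖a‖ ^ 2 + ‖b‖ ^ 2
  have hs : 0 ≤ s := by positivity
  have hlim : Tendsto (fun k => (⟪F k, a⟫_ℝ + ⟪G k, b⟫_ℝ) ^ 2) atTop (𝓝 (s ^ 2)) := by
    simpa [s, real_inner_self_eq_norm_sq] using ((hF a).add (hG b)).pow 2
  have hbound : ∀ k, (⟪F k, a⟫_ℝ + ⟪G k, b⟫_ℝ) ^ 2 ≤ c k * s := fun k => by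
    have hsum : |⟪F k, a⟫_ℝ + ⟪G k, b⟫_ℝ| ≤ ‖F k‖ * ‖a‖ + ‖G k‖ * ‖b‖ :=
      (abs_add_le _ _).trans
        (add_le_add (abs_real_inner_le_norm _ _) (abs_real_inner_le_norm _ _))
    calc (⟪F k, a⟫_ℝ + ⟪G k, b⟫_ℝ) ^ 2
        ≤ (‖F k‖ * ‖a‖ + ‖G k‖ * ‖b‖) ^ 2 := sq_le_sq' (abs_le.1 hsum).1 (abs_le.1 hsum).2
      _ ≤ (‖F k‖ ^ 2 + ‖G k‖ ^ 2) * s := by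
          nlinarith [sq_nonneg (‖F k‖ * ‖b‖ - ‖G k‖ * ‖a‖)]
      _ ≤ c k * s := mul_le_mul_of_nonneg_right (hle k) hs
  have hs2 : s ^ 2 ≤ c₀ * s := le_of_tendsto_of_tendsto' hlim (hc.mul_const s) hbound
  have hc₀ : 0 ≤ c₀ := ge_of_tendsto' hc fun k =>
    (add_nonneg (sq_nonneg _) (sq_nonneg _)).trans (hle k)
  rcases hs.eq_or_lt with h0 | hpos
  · rwa [← h0]
  · nlinarith

end Hilbert

section L2

variable {X : Type*} [MeasurableSpace X] {μ : Measure X}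

theorem MeasureTheory.MemLp.integral_mul_eq_inner {g : X → ℝ} (hg : MemLp g 2 μ)
    (F : Lp ℝ 2 μ) : ∫ x, g x * F x ∂μ = ⟪hg.toLp g, F⟫_ℝ := by
  rw [L2.inner_def]
  refine integral_congr_ae ?_
  filter_upwards [hg.coeFn_toLp] with x hx
  simp [hx, mul_comm]

theorem MeasureTheory.MemLp.norm_toLp_sq {g : X → ℝ} (hg : MemLp g 2 μ) :
    ‖hg.toLp g‖ ^ 2 = ∫ x, g x ^ 2 ∂μ := by
  rw [← real_inner_self_eq_norm_sq, ← hg.integral_mul_eq_inner]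
  refine integral_congr_ae ?_
  filter_upwards [hg.coeFn_toLp] with x hx
  simp [hx, sq]

theorem tendsto_integral_mul_of_tendsto_inner [IsFiniteMeasure μ] {F : ℕ → Lp ℝ 2 μ}
    {A : Lp ℝ 2 μ} {C : ℝ} (hFC : ∀ k, ‖F k‖ ≤ C)
    (hF : ∀ ψ, Tendsto (fun k => ⟪F k, ψ⟫_ℝ) atTop (𝓝 ⟪A, ψ⟫_ℝ))
    {w : ℕ → X → ℝ} {W : X → ℝ} {B : ℝ} (hw : ∀ k, AEStronglyMeasurable (w k) μ)
    (hwB : ∀ k, ∀ᵐ x ∂μ, |w k x| ≤ B)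
    (hwW : ∀ᵐ x ∂μ, Tendsto (fun k => w k x) atTop (𝓝 (W x))) :
    Tendsto (fun k => ∫ x, w k x * F k x ∂μ) atTop (𝓝 (∫ x, W x * A x ∂μ)) := by
  have hWm : AEStronglyMeasurable W μ := aestronglyMeasurable_of_tendsto_ae atTop hw hwW
  have hWB : ∀ᵐ x ∂μ, |W x| ≤ B := by
    filter_upwards [hwW, ae_all_iff.2 hwB] with x hx hxB
    exact le_of_tendsto' hx.abs hxB
  have hwL2 : ∀ k, MemLp (w k) 2 μ := fun k => MemLp.of_bound (hw k) B (hwB k)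
  have hWL2 : MemLp W 2 μ := MemLp.of_bound hWm B hWB
  have hdiffL2 : ∀ k, MemLp (w k - W) 2 μ := fun k => (hwL2 k).sub hWL2
  have hdiff : Tendsto (fun k => ‖(hdiffL2 k).toLp _‖) atTop (𝓝 0) := by
    have hsq : Tendsto (fun k => ∫ x, (w k x - W x) ^ 2 ∂μ) atTop (𝓝 (∫ _, (0 : ℝ) ∂μ)) := by
      refine tendsto_integral_of_dominated_convergence (fun _ => (2 * B) ^ 2)
        (fun k => ((hw k).sub hWm).pow 2) (integrable_const _) (fun k => ?_) ?_
      · filter_upwards [hwB k, hWB] with x h1 h2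
        rw [Real.norm_eq_abs, abs_pow]
        exact pow_le_pow_left₀ (abs_nonneg _) ((abs_sub _ _).trans (by linarith)) 2
      · filter_upwards [hwW] with x hx
        simpa using (hx.sub_const (W x)).pow 2
    have := (hsq.congr fun k => ((hdiffL2 k).norm_toLp_sq).symm).sqrt
    simpa [Real.sqrt_sq (norm_nonneg _)] using this
  have hsplit : ∀ k, ∫ x, w k x * F k x ∂μ
      = ⟪(hdiffL2 k).toLp _, F k⟫_ℝ + ⟪hWL2.toLp W, F k⟫_ℝ := fun k => by
    rw [(hwL2 k).integral_mul_eq_inner, ← inner_add_left, ← MemLp.toLp_add]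
    exact congrArg (⟪·, F k⟫_ℝ) (MemLp.toLp_congr _ _ (.of_forall fun x => by simp))
  have hsmall : Tendsto (fun k => ⟪(hdiffL2 k).toLp _, F k⟫_ℝ) atTop (𝓝 0) := by
    refine squeeze_zero_norm (fun k => ?_) (by simpa only [zero_mul] using hdiff.mul_const C)
    exact (norm_inner_le_norm _ _).trans
      (mul_le_mul_of_nonneg_left (hFC k) (norm_nonneg _))
  rw [hWL2.integral_mul_eq_inner]
  simpa [hsplit, real_inner_comm] using hsmall.add (hF (hWL2.toLp W))

end L2

section IntervalL2

variable {t T s : ℝ}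

theorem intervalIntegral_mul_eq_integral_indicator_mul (hs : s ∈ Icc t T)
    {w f F : ℝ → ℝ} (hF : F =ᵐ[volume.restrict (Ioc t T)] f) :
    ∫ τ in t..s, w τ * f τ
      = ∫ τ, (Ioc t s).indicator w τ * F τ ∂volume.restrict (Ioc t T) := by
  have hsub : Ioc t s ⊆ Ioc t T := Ioc_subset_Ioc_right hs.2
  simp_rw [← indicator_mul_left]
  rw [integral_indicator measurableSet_Ioc, Measure.restrict_restrict measurableSet_Ioc,
    inter_eq_left.2 hsub, intervalIntegral.integral_of_le hs.1]
  refine integral_congr_ae ?_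
  filter_upwards [ae_restrict_of_ae_restrict_of_subset hsub hF] with τ hτ
  rw [hτ]

theorem tendsto_intervalIntegral_mul_of_tendsto_inner (hs : s ∈ Icc t T)
    {F : ℕ → Lp ℝ 2 (volume.restrict (Ioc t T))} {A : Lp ℝ 2 (volume.restrict (Ioc t T))}
    {C : ℝ} (hFC : ∀ k, ‖F k‖ ≤ C)
    (hF : ∀ ψ, Tendsto (fun k => ⟪F k, ψ⟫_ℝ) atTop (𝓝 ⟪A, ψ⟫_ℝ))
    {f : ℕ → ℝ → ℝ} (hfF : ∀ k, F k =ᵐ[volume.restrict (Ioc t T)] f k)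
    {w : ℕ → ℝ → ℝ} {W : ℝ → ℝ} {B : ℝ}
    (hw : ∀ k, AEStronglyMeasurable (w k) (volume.restrict (Ioc t T)))
    (hwB : ∀ k, ∀ τ ∈ Ioc t T, |w k τ| ≤ B)
    (hwW : ∀ τ ∈ Ioc t T, Tendsto (fun k => w k τ) atTop (𝓝 (W τ))) :
    Tendsto (fun k => ∫ τ in t..s, w k τ * f k τ) atTop (𝓝 (∫ τ in t..s, W τ * A τ)) := by
  simp_rw [intervalIntegral_mul_eq_integral_indicator_mul hs (hfF _),
    intervalIntegral_mul_eq_integral_indicator_mul hs (EventuallyEq.refl _ A)]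
  refine tendsto_integral_mul_of_tendsto_inner hFC hF
    (fun k => (hw k).indicator measurableSet_Ioc) (B := B) (fun k => ?_) ?_
  · filter_upwards [ae_restrict_mem measurableSet_Ioc] with τ hτ
    exact (norm_indicator_le_norm_self (s := Ioc t s) (w k) τ).trans (hwB k τ hτ)
  · filter_upwards [ae_restrict_mem measurableSet_Ioc] with τ hτ
    by_cases hτs : τ ∈ Ioc t s
    · simpa [indicator_of_mem hτs] using hwW τ hτ
    · simp [indicator_of_notMem hτs]

end IntervalL2

def stateCost (l : ℝ × ℝ → ℝ → ℝ) (g : ℝ × ℝ → ℝ) (t T : ℝ) (y : ℝ → ℝ × ℝ) : ℝ :=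
  (∫ τ in t..T, l (y τ) τ) + g (y T)

section Trajectories

variable {ν t T : ℝ} {S : Set (ℝ × ℝ)} {l : ℝ × ℝ → ℝ → ℝ} {g : ℝ × ℝ → ℝ}
  {x z : ℝ × ℝ} {y α : ℝ → ℝ × ℝ}

theorem sq2_nonneg (v : ℝ × ℝ) : 0 ≤ sq2 v := add_nonneg (sq_nonneg _) (sq_nonneg _)

theorem Admissible.mapsTo (h : Admissible ν S t T x y α) : MapsTo y (Icc t T) S :=
  fun s hs => h.2.2.2.2.2 s hs

theorem Admissible.apply_start (h : Admissible ν S t T x y α) (htT : t ≤ T) : y t = x := by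
  obtain ⟨-, -, -, h₁, h₂, -⟩ := h
  ext <;> simp [h₁ t ⟨le_rfl, htT⟩, h₂ t ⟨le_rfl, htT⟩]

theorem Admissible.continuousOn (h : Admissible ν S t T x y α) (htT : t ≤ T) :
    ContinuousOn y (Icc t T) := by
  obtain ⟨-, hi₁, hi₂, h₁, h₂, -⟩ := h
  have hc₁ := intervalIntegral.continuousOn_primitive_interval' hi₁ left_mem_uIcc
  have hc₂ := intervalIntegral.continuousOn_primitive_interval' hi₂ left_mem_uIcc
  rw [uIcc_of_le htT] at hc₁ hc₂
  exact ((continuousOn_const.add hc₁).prodMk (continuousOn_const.add hc₂)).congr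
    fun s hs => Prod.ext (h₁ s hs) (h₂ s hs)

theorem continuousOn_running_cost
    (hl : ContinuousOn (fun q : (ℝ × ℝ) × ℝ => l q.1 q.2) (S ×ˢ Icc 0 T)) (ht : 0 ≤ t)
    (hy : ContinuousOn y (Icc t T)) (hyS : MapsTo y (Icc t T) S) :
    ContinuousOn (fun τ => l (y τ) τ) (Icc t T) :=
  hl.comp (hy.prodMk continuousOn_id) fun _ hτ => ⟨hyS hτ, ht.trans hτ.1, hτ.2⟩

theorem cost_eq (hl : ContinuousOn (fun q : (ℝ × ℝ) × ℝ => l q.1 q.2) (S ×ˢ Icc 0 T))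
    (ht : 0 ≤ t) (htT : t ≤ T) (h : Admissible ν S t T x y α) (h₂ : InL2 α t T) :
    cost l g t T y α = (∫ τ in t..T, sq2 (α τ)) / 2 + stateCost l g t T y := by
  have hli := (continuousOn_running_cost hl ht (h.continuousOn htT)
    h.mapsTo).intervalIntegrable_of_Icc (μ := volume) htT
  have hE : IntervalIntegrable (fun τ => sq2 (α τ)) volume t T := h₂
  rw [cost, stateCost, intervalIntegral.integral_add (hE.div_const 2) hli,
    intervalIntegral.integral_div, add_assoc]

theorem stateCost_le_cost (hl : ContinuousOn (fun q : (ℝ × ℝ) × ℝ => l q.1 q.2) (S ×ˢ Icc 0 T))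
    (ht : 0 ≤ t) (htT : t ≤ T) (h : Admissible ν S t T x y α) (h₂ : InL2 α t T) :
    stateCost l g t T y ≤ cost l g t T y α := by
  have hE := intervalIntegral.integral_nonneg (μ := volume) htT fun τ _ => sq2_nonneg (α τ)
  rw [cost_eq hl ht htT h h₂]
  linarith

theorem exists_abs_stateCost_le (hSc : IsCompact S)
    (hl : ContinuousOn (fun q : (ℝ × ℝ) × ℝ => l q.1 q.2) (S ×ˢ Icc 0 T))
    (hg : ContinuousOn g S) (ht : 0 ≤ t) (htT : t ≤ T) :
    ∃ K, ∀ y : ℝ → ℝ × ℝ, MapsTo y (Icc t T) S → |stateCost l g t T y| ≤ K := by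
  obtain ⟨M₁, hM₁⟩ := (hSc.prod isCompact_Icc).exists_bound_of_continuousOn hl
  obtain ⟨M₂, hM₂⟩ := hSc.exists_bound_of_continuousOn hg
  refine ⟨M₁ * |T - t| + M₂, fun y hy => ?_⟩
  unfold stateCost
  refine (abs_add_le _ _).trans (add_le_add ?_ (hM₂ _ (hy ⟨htT, le_rfl⟩)))
  refine intervalIntegral.norm_integral_le_of_norm_le_const (f := fun τ => l (y τ) τ)
    fun τ hτ => ?_
  rw [uIoc_of_le htT] at hτ
  exact hM₁ (y τ, τ) ⟨hy (Ioc_subset_Icc_self hτ), ht.trans hτ.1.le, hτ.2⟩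

theorem const_mem_Gamma (hz : z ∈ S) :
    ((fun _ => z, fun _ => 0) : (ℝ → ℝ × ℝ) × (ℝ → ℝ × ℝ)) ∈ Gamma ν S t T z :=
  ⟨⟨measurable_const, by simp, by simp, by simp, by simp, fun _ _ => hz⟩, by simp [InL2, sq2]⟩

theorem cost_const : cost l g t T (fun _ => z) (fun _ => 0) = stateCost l g t T (fun _ => z) := by
  simp [cost, stateCost, sq2]

theorem bddBelow_cost_image (hSc : IsCompact S)
    (hl : ContinuousOn (fun q : (ℝ × ℝ) × ℝ => l q.1 q.2) (S ×ˢ Icc 0 T))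
    (hg : ContinuousOn g S) (ht : 0 ≤ t) (htT : t ≤ T) :
    BddBelow ((fun p => cost l g t T p.1 p.2) '' Gamma ν S t T z) := by
  obtain ⟨K, hK⟩ := exists_abs_stateCost_le hSc hl hg ht htT
  refine ⟨-K, ?_⟩
  rintro _ ⟨p, hp, rfl⟩
  exact (abs_le.1 (hK _ hp.1.mapsTo)).1.trans (stateCost_le_cost hl ht htT hp.1 hp.2)

theorem valueFun_le_cost (hSc : IsCompact S)
    (hl : ContinuousOn (fun q : (ℝ × ℝ) × ℝ => l q.1 q.2) (S ×ˢ Icc 0 T))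
    (hg : ContinuousOn g S) (ht : 0 ≤ t) (htT : t ≤ T)
    {p : (ℝ → ℝ × ℝ) × (ℝ → ℝ × ℝ)} (hp : p ∈ Gamma ν S t T z) :
    valueFun ν S l g T z t ≤ cost l g t T p.1 p.2 :=
  csInf_le (bddBelow_cost_image hSc hl hg ht htT) ⟨p, hp, rfl⟩

theorem exists_cost_lt_valueFun_add (hz : z ∈ S) {ε : ℝ} (hε : 0 < ε) :
    ∃ p ∈ Gamma ν S t T z, cost l g t T p.1 p.2 < valueFun ν S l g T z t + ε := by
  obtain ⟨_, ⟨p, hp, rfl⟩, hlt⟩ :=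
    Real.lt_sInf_add_pos (Nonempty.image _ ⟨_, const_mem_Gamma (ν := ν) hz⟩) hε
  exact ⟨p, hp, hlt⟩

theorem valueFun_terminal (hz : z ∈ S) : valueFun ν S l g T z T = g z := by
  have himage : (fun p => cost l g T T p.1 p.2) '' Gamma ν S T T z = {g z} := by
    refine Subset.antisymm ?_ (singleton_subset_iff.2 ⟨_, const_mem_Gamma hz, by simp [cost]⟩)
    rintro _ ⟨p, hp, rfl⟩
    simp [cost, hp.1.apply_start le_rfl]
  rw [valueFun, himage, csInf_singleton]

end Trajectories

section Reparametrization

variable {ν t T c d T' : ℝ} {S : Set (ℝ × ℝ)} {x : ℝ × ℝ} {y α : ℝ → ℝ × ℝ}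

theorem intervalIntegrable_const_mul_comp_mul_add {f : ℝ → ℝ}
    (hf : IntervalIntegrable f volume d (c * T' + d)) :
    IntervalIntegrable (fun τ => c * f (c * τ + d)) volume 0 T' := by
  rcases eq_or_ne c 0 with rfl | hc
  · simp
  · have := (hf.comp_add_right d).comp_mul_left (c := c)
    simp only [sub_self, zero_div, add_sub_cancel_right, mul_div_cancel_left₀ _ hc] at this
    exact this.const_mul c

theorem uIcc_subset_of_mapsTo_mul_add (hT' : 0 ≤ T')
    (hθ : MapsTo (fun s => c * s + d) (Icc 0 T') (Icc t T)) :
    uIcc d (c * T' + d) ⊆ uIcc t T := by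
  have hd : d ∈ Icc t T := by simpa using hθ ⟨le_rfl, hT'⟩
  exact uIcc_subset_uIcc (Icc_subset_uIcc hd) (Icc_subset_uIcc (hθ ⟨hT', le_rfl⟩))

theorem eq_add_integral_comp_mul_add {F f : ℝ → ℝ} {a : ℝ}
    (hf : IntervalIntegrable f volume t T) (hF : ∀ s ∈ Icc t T, F s = a + ∫ τ in t..s, f τ)
    (hT' : 0 ≤ T') (hθ : MapsTo (fun s => c * s + d) (Icc 0 T') (Icc t T))
    {s : ℝ} (hs : s ∈ Icc 0 T') :
    F (c * s + d) = F d + ∫ τ in 0..s, c * f (c * τ + d) := by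
  have hd : d ∈ Icc t T := by simpa using hθ ⟨le_rfl, hT'⟩
  have hsub : ∀ u ∈ Icc t T, IntervalIntegrable f volume t u := fun u hu =>
    hf.mono_set (uIcc_subset_uIcc left_mem_uIcc (Icc_subset_uIcc hu))
  rw [hF _ (hθ hs), hF d hd, intervalIntegral.integral_const_mul, ← smul_eq_mul,
    intervalIntegral.smul_integral_comp_mul_add, mul_zero, zero_add, add_assoc,
    intervalIntegral.integral_add_adjacent_intervals (hsub d hd) ((hsub d hd).symm.trans
      (hsub _ (hθ hs)))]

theorem Admissible.comp_mul_add (h : Admissible ν S t T x y α) (hT' : 0 ≤ T')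
    (hθ : MapsTo (fun s => c * s + d) (Icc 0 T') (Icc t T)) :
    Admissible ν S 0 T' (y d) (fun s => y (c * s + d)) (fun s => c • α (c * s + d)) := by
  obtain ⟨hm, hi₁, hi₂, h₁, h₂, hS⟩ := h
  have hI := uIcc_subset_of_mapsTo_mul_add hT' hθ
  refine ⟨(hm.comp ((measurable_id.const_mul c).add_const d)).const_smul c, ?_, ?_,
    fun s hs => ?_, fun s hs => ?_, fun s hs => hS _ (hθ hs)⟩
  · simpa using intervalIntegrable_const_mul_comp_mul_add (hi₁.mono_set hI)
  · simpa [mul_left_comm] using intervalIntegrable_const_mul_comp_mul_add (hi₂.mono_set hI)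
  · simpa using eq_add_integral_comp_mul_add (F := fun s => (y s).1) hi₁ h₁ hT' hθ hs
  · simpa [mul_left_comm] using
      eq_add_integral_comp_mul_add (F := fun s => (y s).2) hi₂ h₂ hT' hθ hs

theorem InL2.comp_mul_add (h : InL2 α t T) (hT' : 0 ≤ T')
    (hθ : MapsTo (fun s => c * s + d) (Icc 0 T') (Icc t T)) :
    InL2 (fun s => c • α (c * s + d)) 0 T' := by
  have := (intervalIntegrable_const_mul_comp_mul_add
    (IntervalIntegrable.mono_set h (uIcc_subset_of_mapsTo_mul_add hT' hθ))).const_mul c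
  unfold InL2
  convert this using 1
  funext τ
  simp only [sq2, Prod.smul_fst, Prod.smul_snd, smul_eq_mul]
  ring

end Reparametrization

section Unreachable

variable {ν t T : ℝ} {S : Set (ℝ × ℝ)} {l : ℝ × ℝ → ℝ → ℝ} {g : ℝ × ℝ → ℝ} {x : ℝ × ℝ}

/-- Running a non-constant trajectory from `x` backwards would reach `x` from another point. -/
theorem Unreachable.eq_of_mem_Gamma (hUn : Unreachable ν S T x) (ht : 0 ≤ t)
    {p : (ℝ → ℝ × ℝ) × (ℝ → ℝ × ℝ)} (hp : p ∈ Gamma ν S t T x) {s : ℝ} (hs : s ∈ Icc t T) :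
    p.1 s = x := by
  by_contra hne
  have hstart := hp.1.apply_start (hs.1.trans hs.2)
  have hts : t < s := hs.1.lt_of_ne (by rintro rfl; exact hne hstart)
  have hT : 0 < T := ht.trans_lt (hts.trans_le hs.2)
  obtain ⟨c, hcT, hc⟩ : ∃ c : ℝ, c * T + s = t ∧ c ≤ 0 :=
    ⟨(t - s) / T, by field_simp; ring, div_nonpos_of_nonpos_of_nonneg (by linarith) hT.le⟩
  have hθ : MapsTo (fun r => c * r + s) (Icc 0 T) (Icc t T) := fun r hr => by
    have h₁ : c * T ≤ c * r := mul_le_mul_of_nonpos_left hr.2 hc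
    have h₂ : c * r ≤ 0 := mul_nonpos_of_nonpos_of_nonneg hc hr.1
    constructor <;> linarith [hs.2]
  refine hUn (p.1 s) ⟨hp.1.mapsTo hs, hne⟩
    ⟨(fun r => p.1 (c * r + s), fun r => c • p.2 (c * r + s)),
      ⟨hp.1.comp_mul_add hT.le hθ, hp.2.comp_mul_add hT.le hθ⟩, ?_⟩
  simp only [hcT, hstart]

theorem valueFun_eq_stateCost_of_unreachable (hUn : Unreachable ν S T x) (hSc : IsCompact S)
    (hl : ContinuousOn (fun q : (ℝ × ℝ) × ℝ => l q.1 q.2) (S ×ˢ Icc 0 T))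
    (hg : ContinuousOn g S) (ht : 0 ≤ t) (htT : t ≤ T) (hx : x ∈ S) :
    valueFun ν S l g T x t = stateCost l g t T (fun _ => x) := by
  refine le_antisymm
    ((valueFun_le_cost hSc hl hg ht htT (const_mem_Gamma hx)).trans_eq cost_const) ?_
  refine le_csInf (Nonempty.image _ ⟨_, const_mem_Gamma hx⟩) ?_
  rintro _ ⟨p, hp, rfl⟩
  have hconst : stateCost l g t T p.1 = stateCost l g t T (fun _ => x) := by
    unfold stateCost
    rw [hUn.eq_of_mem_Gamma ht hp ⟨htT, le_rfl⟩]
    congr 1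
    refine intervalIntegral.integral_congr fun τ hτ => ?_
    rw [uIcc_of_le htT] at hτ
    simp [hUn.eq_of_mem_Gamma ht hp hτ]
  exact hconst ▸ stateCost_le_cost hl ht htT hp.1 hp.2

end Unreachable

section Limits

variable {ν t T : ℝ} {S : Set (ℝ × ℝ)} {l : ℝ × ℝ → ℝ → ℝ} {g : ℝ × ℝ → ℝ}
  {x : ℝ × ℝ} {α : ℝ → ℝ × ℝ}

theorem tendsto_stateCost (hSc : IsCompact S)
    (hl : ContinuousOn (fun q : (ℝ × ℝ) × ℝ => l q.1 q.2) (S ×ˢ Icc 0 T))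
    (hg : ContinuousOn g S) (ht : 0 ≤ t) (htT : t ≤ T)
    {y : ℕ → ℝ → ℝ × ℝ} {Y : ℝ → ℝ × ℝ} (hy : ∀ k, ContinuousOn (y k) (Icc t T))
    (hyS : ∀ k, MapsTo (y k) (Icc t T) S) (hYS : MapsTo Y (Icc t T) S)
    (hlim : ∀ s ∈ Icc t T, Tendsto (fun k => y k s) atTop (𝓝 (Y s))) :
    Tendsto (fun k => stateCost l g t T (y k)) atTop (𝓝 (stateCost l g t T Y)) := by
  obtain ⟨M, hM⟩ := (hSc.prod isCompact_Icc).exists_bound_of_continuousOn hl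
  have hT : T ∈ Icc t T := ⟨htT, le_rfl⟩
  have hmem : ∀ τ ∈ uIoc t T, τ ∈ Icc t T := fun τ hτ => by
    rw [uIoc_of_le htT] at hτ
    exact Ioc_subset_Icc_self hτ
  simp only [stateCost]
  refine Tendsto.add ?_ ((hg.continuousWithinAt (hYS hT)).tendsto.comp
    (tendsto_nhdsWithin_iff.2 ⟨hlim T hT, .of_forall fun k => hyS k hT⟩))
  refine intervalIntegral.tendsto_integral_filter_of_dominated_convergence (fun _ => M)
    (.of_forall fun k => ?_) (.of_forall fun k => .of_forall fun τ hτ => ?_)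
    intervalIntegrable_const (.of_forall fun τ hτ => ?_)
  · rw [uIoc_of_le htT]
    exact ((continuousOn_running_cost hl ht (hy k) (hyS k)).mono
      Ioc_subset_Icc_self).aestronglyMeasurable measurableSet_Ioc
  · have hτ' := hmem τ hτ
    exact hM (y k τ, τ) ⟨hyS k hτ', ht.trans hτ'.1, hτ'.2⟩
  · have hτ' := hmem τ hτ
    exact (hl _ ⟨hYS hτ', ht.trans hτ'.1, hτ'.2⟩).tendsto.comp (tendsto_nhdsWithin_iff.2
      ⟨(hlim τ hτ').prodMk_nhds tendsto_const_nhds,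
        .of_forall fun k => ⟨hyS k hτ', ht.trans hτ'.1, hτ'.2⟩⟩)

theorem InL2.memLp_fst (h : InL2 α t T) (hα : Measurable α) (htT : t ≤ T) :
    MemLp (fun τ => (α τ).1) 2 (volume.restrict (Ioc t T)) := by
  refine (memLp_two_iff_integrable_sq (hα.fst.aestronglyMeasurable)).2 ?_
  refine ((intervalIntegrable_iff_integrableOn_Ioc_of_le htT).1 h).mono'
    (hα.fst.pow_const 2).aestronglyMeasurable (.of_forall fun τ => ?_)
  simpa [sq2] using sq_nonneg (α τ).2

theorem InL2.memLp_snd (h : InL2 α t T) (hα : Measurable α) (htT : t ≤ T) :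
    MemLp (fun τ => (α τ).2) 2 (volume.restrict (Ioc t T)) := by
  refine (memLp_two_iff_integrable_sq (hα.snd.aestronglyMeasurable)).2 ?_
  refine ((intervalIntegrable_iff_integrableOn_Ioc_of_le htT).1 h).mono'
    (hα.snd.pow_const 2).aestronglyMeasurable (.of_forall fun τ => ?_)
  simpa [sq2] using sq_nonneg (α τ).1

theorem integral_sq2_eq (h : InL2 α t T) (hα : Measurable α) (htT : t ≤ T) :
    ∫ τ in t..T, sq2 (α τ)
      = ‖(h.memLp_fst hα htT).toLp _‖ ^ 2 + ‖(h.memLp_snd hα htT).toLp _‖ ^ 2 := by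
  rw [MemLp.norm_toLp_sq, MemLp.norm_toLp_sq, intervalIntegral.integral_of_le htT,
    ← integral_add (h.memLp_fst hα htT).integrable_sq (h.memLp_snd hα htT).integrable_sq]
  rfl

end Limits

section Compactness

variable {ν t T : ℝ} {S : Set (ℝ × ℝ)} {l : ℝ × ℝ → ℝ → ℝ} {g : ℝ × ℝ → ℝ} {x : ℝ × ℝ}

theorem mem_Gamma_of_memLp (hν : 0 ≤ ν) (htT : t ≤ T)
    {A₁ A₂ : Lp ℝ 2 (volume.restrict (Ioc t T))} {Y : ℝ → ℝ × ℝ}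
    (hY₁ : ∀ s, (Y s).1 = x.1 + ∫ τ in t..s, A₁ τ)
    (hY₂ : ∀ s, (Y s).2 = x.2 + ∫ τ in t..s, |(Y τ).1| ^ ν * A₂ τ)
    (hYS : MapsTo Y (Icc t T) S) :
    (Y, fun τ => (A₁ τ, A₂ τ)) ∈ Gamma ν S t T x := by
  have hA₁ : IntervalIntegrable A₁ volume t T :=
    (intervalIntegrable_iff_integrableOn_Ioc_of_le htT).2 ((Lp.memLp A₁).integrable one_le_two)
  have hA₂ : IntervalIntegrable A₂ volume t T :=
    (intervalIntegrable_iff_integrableOn_Ioc_of_le htT).2 ((Lp.memLp A₂).integrable one_le_two)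
  have hY : ContinuousOn (fun s => (Y s).1) (Icc t T) := by
    have hprim := intervalIntegral.continuousOn_primitive_interval' hA₁ left_mem_uIcc
    rw [uIcc_of_le htT] at hprim
    exact (continuousOn_const.add hprim).congr fun s _ => hY₁ s
  refine ⟨⟨?_, hA₁, ?_, fun s _ => hY₁ s, fun s _ => hY₂ s, fun s hs => hYS hs⟩, ?_⟩
  · exact (Lp.stronglyMeasurable A₁).measurable.prodMk (Lp.stronglyMeasurable A₂).measurable
  · refine hA₂.continuousOn_mul ?_
    rw [uIcc_of_le htT]
    exact (continuous_abs.rpow_const fun _ => Or.inr hν).comp_continuousOn hY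
  · exact (intervalIntegrable_iff_integrableOn_Ioc_of_le htT).2
      ((Lp.memLp A₁).integrable_sq.add (Lp.memLp A₂).integrable_sq)

theorem exists_mem_Gamma_of_tendsto_inner (hν : 0 ≤ ν) (hSc : IsCompact S) (htT : t ≤ T)
    {z : ℕ → ℝ × ℝ} (hz : Tendsto z atTop (𝓝 x))
    {p : ℕ → (ℝ → ℝ × ℝ) × (ℝ → ℝ × ℝ)} (hp : ∀ k, p k ∈ Gamma ν S t T (z k))
    {F₁ F₂ : ℕ → Lp ℝ 2 (volume.restrict (Ioc t T))}
    (hF₁ : ∀ k, F₁ k =ᵐ[volume.restrict (Ioc t T)] fun τ => ((p k).2 τ).1)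
    (hF₂ : ∀ k, F₂ k =ᵐ[volume.restrict (Ioc t T)] fun τ => ((p k).2 τ).2)
    {C : ℝ} (hC₁ : ∀ k, ‖F₁ k‖ ≤ C) (hC₂ : ∀ k, ‖F₂ k‖ ≤ C)
    {A₁ A₂ : Lp ℝ 2 (volume.restrict (Ioc t T))}
    (hA₁ : ∀ ψ, Tendsto (fun k => ⟪F₁ k, ψ⟫_ℝ) atTop (𝓝 ⟪A₁, ψ⟫_ℝ))
    (hA₂ : ∀ ψ, Tendsto (fun k => ⟪F₂ k, ψ⟫_ℝ) atTop (𝓝 ⟪A₂, ψ⟫_ℝ)) :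
    ∃ Y : ℝ → ℝ × ℝ, (Y, fun τ => (A₁ τ, A₂ τ)) ∈ Gamma ν S t T x ∧
      ∀ s ∈ Icc t T, Tendsto (fun k => (p k).1 s) atTop (𝓝 (Y s)) := by
  set Y₁ : ℝ → ℝ := fun s => x.1 + ∫ τ in t..s, A₁ τ
  have hlim₁ : ∀ s ∈ Icc t T, Tendsto (fun k => ((p k).1 s).1) atTop (𝓝 (Y₁ s)) := by
    intro s hs
    have hint := tendsto_intervalIntegral_mul_of_tendsto_inner hs hC₁ hA₁ hF₁
      (w := fun _ _ => 1) (W := fun _ => 1) (B := 1) (fun _ => aestronglyMeasurable_const)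
      (fun _ _ _ => by simp) (fun _ _ => tendsto_const_nhds)
    simp only [one_mul] at hint
    exact (((continuous_fst.tendsto x).comp hz).add hint).congr
      fun k => ((hp k).1.2.2.2.1 s hs).symm
  have hpow : Continuous fun r : ℝ => |r| ^ ν := continuous_abs.rpow_const fun _ => Or.inr hν
  obtain ⟨R, hR⟩ := hSc.exists_bound_of_continuousOn continuous_fst.continuousOn
  set Y₂ : ℝ → ℝ := fun s => x.2 + ∫ τ in t..s, |Y₁ τ| ^ ν * A₂ τ
  have hlim₂ : ∀ s ∈ Icc t T, Tendsto (fun k => ((p k).1 s).2) atTop (𝓝 (Y₂ s)) := by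
    intro s hs
    have hint := tendsto_intervalIntegral_mul_of_tendsto_inner hs hC₂ hA₂ hF₂
      (w := fun k τ => |((p k).1 τ).1| ^ ν) (W := fun τ => |Y₁ τ| ^ ν) (B := R ^ ν)
      (fun k => ((hpow.comp_continuousOn (continuous_fst.comp_continuousOn
        ((hp k).1.continuousOn htT))).mono Ioc_subset_Icc_self).aestronglyMeasurable
          measurableSet_Ioc)
      (fun k τ hτ => by
        rw [abs_of_nonneg (by positivity)]
        exact Real.rpow_le_rpow (abs_nonneg _)
          (hR _ ((hp k).1.mapsTo (Ioc_subset_Icc_self hτ))) hν)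
      (fun τ hτ => (hpow.tendsto _).comp (hlim₁ τ (Ioc_subset_Icc_self hτ)))
    exact (((continuous_snd.tendsto x).comp hz).add hint).congr
      fun k => ((hp k).1.2.2.2.2.1 s hs).symm
  have hlim : ∀ s ∈ Icc t T, Tendsto (fun k => (p k).1 s) atTop (𝓝 (Y₁ s, Y₂ s)) :=
    fun s hs => (hlim₁ s hs).prodMk_nhds (hlim₂ s hs)
  exact ⟨_, mem_Gamma_of_memLp hν htT (fun _ => rfl) (fun _ => rfl) fun s hs =>
    hSc.isClosed.mem_of_tendsto (hlim s hs) (.of_forall fun k => (hp k).1.mapsTo hs), hlim⟩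

end Compactness

section Value

variable {ν t T : ℝ} {S : Set (ℝ × ℝ)} {l : ℝ × ℝ → ℝ → ℝ} {g : ℝ × ℝ → ℝ} {x : ℝ × ℝ}

theorem exists_mem_Gamma_cost_le_of_tendsto (hν : 0 ≤ ν) (hSc : IsCompact S)
    (hl : ContinuousOn (fun q : (ℝ × ℝ) × ℝ => l q.1 q.2) (S ×ˢ Icc 0 T))
    (hg : ContinuousOn g S) (ht : 0 ≤ t) (htT : t ≤ T)
    {z : ℕ → ℝ × ℝ} (hz : Tendsto z atTop (𝓝 x))
    {p : ℕ → (ℝ → ℝ × ℝ) × (ℝ → ℝ × ℝ)} (hp : ∀ k, p k ∈ Gamma ν S t T (z k))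
    {C : ℝ} (hC : ∀ k, cost l g t T (p k).1 (p k).2 ≤ C) :
    ∃ q ∈ Gamma ν S t T x, cost l g t T q.1 q.2 ≤ C := by
  obtain ⟨K, hK⟩ := exists_abs_stateCost_le hSc hl hg ht htT
  set F₁ := fun k => ((hp k).2.memLp_fst (hp k).1.1 htT).toLp _
  set F₂ := fun k => ((hp k).2.memLp_snd (hp k).1.1 htT).toLp _
  have henergy : ∀ k, ‖F₁ k‖ ^ 2 + ‖F₂ k‖ ^ 2 ≤ 2 * (C - stateCost l g t T (p k).1) := by
    intro k
    have := hC k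
    rw [cost_eq hl ht htT (hp k).1 (hp k).2, integral_sq2_eq (hp k).2 (hp k).1.1 htT] at this
    linarith
  have hbound : ∀ k, ‖F₁ k‖ ^ 2 + ‖F₂ k‖ ^ 2 ≤ 2 * (C + K) := fun k =>
    (henergy k).trans (by linarith [(abs_le.1 (hK _ (hp k).1.mapsTo)).1])
  have hF₁ : ∀ k, ‖F₁ k‖ ≤ √(2 * (C + K)) := fun k =>
    Real.le_sqrt_of_sq_le (by nlinarith [hbound k, sq_nonneg ‖F₂ k‖])
  have hF₂ : ∀ k, ‖F₂ k‖ ≤ √(2 * (C + K)) := fun k =>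
    Real.le_sqrt_of_sq_le (by nlinarith [hbound k, sq_nonneg ‖F₁ k‖])
  -- makes `Lp.SecondCountableTopology`, hence separability of `L²`, available
  have : Fact ((2 : ENNReal) ≠ ⊤) := ⟨ENNReal.ofNat_ne_top⟩
  obtain ⟨A₁, φ₁, hφ₁, hA₁⟩ := exists_subseq_tendsto_inner hF₁
  obtain ⟨A₂, φ₂, hφ₂, hA₂⟩ := exists_subseq_tendsto_inner fun k => hF₂ (φ₁ k)
  have hφ : StrictMono (φ₁ ∘ φ₂) := hφ₁.comp hφ₂
  have hA₁' : ∀ ψ, Tendsto (fun k => ⟪F₁ (φ₁ (φ₂ k)), ψ⟫_ℝ) atTop (𝓝 ⟪A₁, ψ⟫_ℝ) :=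
    fun ψ => (hA₁ ψ).comp hφ₂.tendsto_atTop
  obtain ⟨Y, hq, hlim⟩ := exists_mem_Gamma_of_tendsto_inner hν hSc htT
    (hz.comp hφ.tendsto_atTop) (fun k => hp (φ₁ (φ₂ k)))
    (fun _ => MemLp.coeFn_toLp _) (fun _ => MemLp.coeFn_toLp _)
    (fun _ => hF₁ _) (fun _ => hF₂ _) hA₁' hA₂
  refine ⟨_, hq, ?_⟩
  have hstate := tendsto_stateCost hSc hl hg ht htT
    (fun k => (hp (φ₁ (φ₂ k))).1.continuousOn htT) (fun k => (hp (φ₁ (φ₂ k))).1.mapsTo)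
    hq.1.mapsTo hlim
  have hlsc := sq_norm_add_sq_norm_le_of_tendsto_inner hA₁' hA₂
    ((hstate.const_sub C).const_mul 2) fun k => henergy (φ₁ (φ₂ k))
  rw [cost_eq hl ht htT hq.1 hq.2, integral_sq2_eq hq.2 hq.1.1 htT]
  simp only [Lp.toLp_coeFn]
  linarith

theorem lowerSemicontinuousWithinAt_valueFun (hν : 0 ≤ ν) (hSc : IsCompact S)
    (hl : ContinuousOn (fun q : (ℝ × ℝ) × ℝ => l q.1 q.2) (S ×ˢ Icc 0 T))
    (hg : ContinuousOn g S) (ht : 0 ≤ t) (htT : t ≤ T) :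
    LowerSemicontinuousWithinAt (fun z => valueFun ν S l g T z t) S x := by
  refine lowerSemicontinuousWithinAt_of_seq fun z hzS hz c hc => le_of_forall_pos_le_add
    fun ε hε => ?_
  choose p hp hpc using fun k => exists_cost_lt_valueFun_add (ν := ν) (l := l) (g := g)
    (t := t) (T := T) (hzS k) hε
  obtain ⟨q, hq, hqc⟩ := exists_mem_Gamma_cost_le_of_tendsto hν hSc hl hg ht htT hz hp
    (C := c + ε) fun k => by linarith [hpc k, hc k]
  exact (valueFun_le_cost hSc hl hg ht htT hq).trans hqc

theorem upperSemicontinuousWithinAt_valueFun_of_approx (hSc : IsCompact S)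
    (hl : ContinuousOn (fun q : (ℝ × ℝ) × ℝ => l q.1 q.2) (S ×ˢ Icc 0 T))
    (hg : ContinuousOn g S) (ht : 0 ≤ t) (htT : t ≤ T) (hx : x ∈ S)
    (hAP : ApproxProperty ν S l g t T x) :
    UpperSemicontinuousWithinAt (fun z => valueFun ν S l g T z t) S x := by
  refine upperSemicontinuousWithinAt_of_seq fun z hzS hz c hc => ?_
  obtain ⟨p, hp, hpc⟩ := exists_cost_lt_valueFun_add (ν := ν) (l := l) (g := g) (t := t)
    (T := T) hx (sub_pos.2 hc)
  rw [add_sub_cancel] at hpc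
  obtain ⟨ys, as, hmem, -, -, hcost⟩ := hAP p.1 p.2 hp z hzS hz
  filter_upwards [Tendsto.eventually_lt_const hpc hcost] with k hk
  exact (valueFun_le_cost hSc hl hg ht htT (hmem k)).trans_lt hk

theorem upperSemicontinuousWithinAt_valueFun_of_unreachable (hSc : IsCompact S)
    (hl : ContinuousOn (fun q : (ℝ × ℝ) × ℝ => l q.1 q.2) (S ×ˢ Icc 0 T))
    (hg : ContinuousOn g S) (ht : 0 ≤ t) (htT : t ≤ T) (hx : x ∈ S)
    (hUn : Unreachable ν S T x) :
    UpperSemicontinuousWithinAt (fun z => valueFun ν S l g T z t) S x := by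
  refine upperSemicontinuousWithinAt_of_seq fun z hzS hz c hc => ?_
  rw [valueFun_eq_stateCost_of_unreachable hUn hSc hl hg ht htT hx] at hc
  have hlim := tendsto_stateCost (y := fun k _ => z k) (Y := fun _ => x) hSc hl hg ht htT
    (fun _ => continuousOn_const) (fun k _ _ => hzS k) (fun _ _ => hx) fun _ _ => hz
  filter_upwards [Tendsto.eventually_lt_const hc hlim] with k hk
  exact ((valueFun_le_cost hSc hl hg ht htT (const_mem_Gamma (hzS k))).trans_eq
    cost_const).trans_lt hk

end Value

theorem value_continuous_at_point_general
    (T ν : ℝ) (hν : 0 < ν)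
    (S : Set (ℝ × ℝ)) (hSc : IsCompact S)
    (l : ℝ × ℝ → ℝ → ℝ) (g : ℝ × ℝ → ℝ)
    (hl : ContinuousOn (fun q : (ℝ × ℝ) × ℝ => l q.1 q.2) (S ×ˢ Icc 0 T))
    (hg : ContinuousOn g S)
    (x : ℝ × ℝ) (hx : x ∈ S)
    (hyp : (∀ t ∈ Ico (0 : ℝ) T, ApproxProperty ν S l g t T x) ∨ Unreachable ν S T x) :
    ∀ t ∈ Icc (0 : ℝ) T,
      ContinuousWithinAt (fun z => valueFun ν S l g T z t) S x := by
  rintro t ⟨ht, htT⟩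
  rcases htT.eq_or_lt with rfl | htT
  · exact (hg.continuousWithinAt hx).congr (fun z hz => valueFun_terminal hz)
      (valueFun_terminal hx)
  refine continuousWithinAt_iff_lower_upperSemicontinuousWithinAt.2
    ⟨lowerSemicontinuousWithinAt_valueFun hν.le hSc hl hg ht htT.le, ?_⟩
  rcases hyp with hAP | hUn
  · exact upperSemicontinuousWithinAt_valueFun_of_approx hSc hl hg ht htT.le hx (hAP t ⟨ht, htT⟩)
  · exact upperSemicontinuousWithinAt_valueFun_of_unreachable hSc hl hg ht htT.le hx hUn

/-- if either the approximation property holds at `x` for every initial time,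
or `x` is unreachable, then `u(·,t)` is continuous at `x` for every `t ∈ [0,T]`. -/
theorem value_continuous_at_point
    (T ν : ℝ) (hT : 0 < T) (hν : 0 < ν)
    (S : Set (ℝ × ℝ)) (hSc : IsCompact S) (hSne : S.Nonempty)
    (l : ℝ × ℝ → ℝ → ℝ) (g : ℝ × ℝ → ℝ)
    (hl : ContinuousOn (fun q : (ℝ × ℝ) × ℝ => l q.1 q.2) (S ×ˢ Icc 0 T))
    (hg : ContinuousOn g S)
    (x : ℝ × ℝ) (hx : x ∈ S)
    (hyp : (∀ t ∈ Ico (0 : ℝ) T, ApproxProperty ν S l g t T x) ∨ Unreachable ν S T x) :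
    ∀ t ∈ Icc (0 : ℝ) T,
      ContinuousWithinAt (fun z => valueFun ν S l g T z t) S x :=
  value_continuous_at_point_general T ν hν S hSc l g hl hg x hx hyp
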